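/- Let p ≥ 1, δ > 0 and η ∈ P_p(ℝ). Define the open-constraint set Π_δ(η, ·) := { π ∈ P(ℝ²) with first marginal η and C_p(π) < δ } and the closed-constraint set Π̄_δ(η, ·) := { π ∈ P(ℝ²) with first marginal η and C_p(π) ≤ δ }. Then Π_δ(η, ·) is dense in Π̄_δ(η, ·) with respect to the Wasserstein distance W_p on P_p(ℝ × ℝ). -/

import Mathlib

open MeasureTheory ProbabilityTheory Filter Set
open scoped ENNReal NNReal Topology

noncomputable section

namespace Paper

abbrev Path (N : ℕ) := Fin N → ℝ
abbrev PathPair (N : ℕ) := (Fin N → ℝ) × (Fin N → ℝ)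

/-- the `p`-norm `(∑ |x i|^p)^{1/p}` on `ℝ^N`. -/
def pnorm (p : ℝ) {N : ℕ} (x : Fin N → ℝ) : ℝ := (∑ i : Fin N, |x i| ^ p) ^ (1 / p)

/-- the `p`-norm of the coordinates with index `≥ t`. -/
def pnormFrom (p : ℝ) {N : ℕ} (t : ℕ) (x : Path N) : ℝ :=
  (∑ i : Fin N, if t ≤ (i : ℕ) then |x i| ^ p else 0) ^ (1 / p)

/-- one-step `L^p` transport cost `C_p(π) = (∫ |x-y|^p dπ)^{1/p}` of a plan on `ℝ × ℝ`. -/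
def Cp (p : ℝ) (π : Measure (ℝ × ℝ)) : ℝ := (∫ z, |z.1 - z.2| ^ p ∂π) ^ (1 / p)

/-- `γ` is a coupling (transport plan) of `μ` and `ν`. -/
def IsCoupling {α β : Type*} [MeasurableSpace α] [MeasurableSpace β]
    (γ : Measure (α × β)) (μ : Measure α) (ν : Measure β) : Prop :=
  γ.map Prod.fst = μ ∧ γ.map Prod.snd = ν

/-- the `p`-Wasserstein distance between measures on `ℝ`. -/
def WpR (p : ℝ) (m₁ m₂ : Measure ℝ) : ℝ :=
  sInf { r | ∃ π : Measure (ℝ × ℝ), IsCoupling π m₁ m₂ ∧ r = Cp p π }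

/-- the `p`-Wasserstein distance on `ℝ^N` with the `p`-norm cost. -/
def Wp (p : ℝ) {N : ℕ} (μ ν : Measure (Path N)) : ℝ :=
  sInf { r | ∃ γ : Measure (PathPair N), IsCoupling γ μ ν ∧
    r = (∫ z, pnorm p (z.1 - z.2) ^ p ∂γ) ^ (1 / p) }

/-- the `p`-Wasserstein distance between measures on `ℝ × ℝ` (with the `p`-sum product cost). -/
def Wp2 (p : ℝ) (m₁ m₂ : Measure (ℝ × ℝ)) : ℝ :=
  sInf { r | ∃ Γ : Measure ((ℝ × ℝ) × (ℝ × ℝ)), IsCoupling Γ m₁ m₂ ∧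
    r = (∫ w, (|w.1.1 - w.2.1| ^ p + |w.1.2 - w.2.2| ^ p) ∂Γ) ^ (1 / p) }

/-- finite `p`-th moment. -/
def FiniteMomentP (p : ℝ) {N : ℕ} (μ : Measure (Path N)) : Prop :=
  Integrable (fun x => pnorm p x ^ p) μ

/-- truncation: keeps the first `t` coordinates of a path, zero elsewhere. -/
def trunc (N t : ℕ) (x : Path N) : Path N := fun i => if (i : ℕ) < t then x i else 0

/-- evaluation of the `t`-th coordinate (`0`-based). -/
def evalAt (N t : ℕ) (x : Path N) : ℝ := if h : t < N then x ⟨t, h⟩ else 0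

/-- update of the `t`-th coordinate (`0`-based). -/
def updAt (N t : ℕ) (x : Path N) (v : ℝ) : Path N := fun i => if (i : ℕ) = t then v else x i

/-- the canonical (regular) conditional kernel of a measure on a product space. -/
def condK {α Ω : Type*} [MeasurableSpace α] [MeasurableSpace Ω]
    [StandardBorelSpace Ω] [Nonempty Ω] (ρ : Measure (α × Ω)) : α → Measure Ω := by
  classical
  exact if h : IsFiniteMeasure ρ then (haveI := h; fun a => ρ.condKernel a) else fun _ => 0

/-- the one-step conditional (regular conditional distribution) kernel `x_{1:t} ↦ μ_{x_{1:t}}`. -/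
def stepK {N : ℕ} (μ : Measure (Path N)) (t : ℕ) : Path N → Measure ℝ :=
  condK (μ.map fun x => (trunc N t x, evalAt N t x))

/-- the conditional law of the whole path given the first `t` coordinates. -/
def condPath {N : ℕ} (μ : Measure (Path N)) (t : ℕ) : Path N → Measure (Path N) :=
  condK (μ.map fun x => (trunc N t x, x))

/-- the conditional law `μ̄_{x_{1:t}}` of the remaining coordinates `x_{t+1:N}`. -/
def tailLaw {N : ℕ} (μ : Measure (Path N)) (t : ℕ) : Path N → Measure (Fin (N - t) → ℝ) :=
  condK (μ.map fun x => (trunc N t x,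
    fun i : Fin (N - t) => x ⟨t + i.1, by have := i.isLt; omega⟩))

/-- the one-step conditional kernel of a coupling given `(x_{1:t}, y_{1:t})`. -/
def pairStepK {N : ℕ} (γ : Measure (PathPair N)) (t : ℕ) : PathPair N → Measure (ℝ × ℝ) :=
  condK (γ.map fun ω => ((trunc N t ω.1, trunc N t ω.2), (evalAt N t ω.1, evalAt N t ω.2)))

/-- Bicausality of a coupling of the laws of two `N`-step processes:
for every `t` and Borel `A`, `γ_{x_{1:N}}(y_{1:t} ∈ A) = γ_{x_{1:t}}(y_{1:t} ∈ A)`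
(expressed via conditional expectations), and symmetrically in `x` and `y`. -/
def Bicausal {N : ℕ} (γ : Measure (PathPair N)) : Prop :=
  ∀ t, t ≤ N → ∀ A : Set (Path N), MeasurableSet A →
    (γ[({ω : PathPair N | trunc N t ω.2 ∈ A}.indicator fun _ => (1 : ℝ)) |
        MeasurableSpace.comap Prod.fst inferInstance]
      =ᵐ[γ]
     γ[({ω : PathPair N | trunc N t ω.2 ∈ A}.indicator fun _ => (1 : ℝ)) |
        MeasurableSpace.comap (fun ω : PathPair N => trunc N t ω.1) inferInstance])
    ∧
    (γ[({ω : PathPair N | trunc N t ω.1 ∈ A}.indicator fun _ => (1 : ℝ)) |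
        MeasurableSpace.comap Prod.snd inferInstance]
      =ᵐ[γ]
     γ[({ω : PathPair N | trunc N t ω.1 ∈ A}.indicator fun _ => (1 : ℝ)) |
        MeasurableSpace.comap (fun ω : PathPair N => trunc N t ω.2) inferInstance])

/-- the adapted `p`-Wasserstein distance `AW_p`. -/
def AWp (p : ℝ) {N : ℕ} (μ ν : Measure (Path N)) : ℝ :=
  (sInf { r | ∃ γ : Measure (PathPair N), IsCoupling γ μ ν ∧ Bicausal γ ∧
      r = ∫ z, pnorm p (z.1 - z.2) ^ p ∂γ }) ^ (1 / p)

/-- peel off the first coordinates of a pair of paths. -/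
def peel (k : ℕ) (ω : PathPair (k + 1)) : (ℝ × ℝ) × PathPair k :=
  ((ω.1 0, ω.2 0), (fun i => ω.1 i.succ, fun i => ω.2 i.succ))

/-- the functional `F_{t,p}` (indexed by the number `k = N - t` of remaining steps):
`F_{N,p} = 0` and `F_{t,p}(γ) = C_p(γ^1) ⊔ ‖F_{t+1,p}(γ̄_{x_1,y_1})‖_{L^∞(γ^1)}`. -/
def Fadapt (p : ℝ) : (k : ℕ) → Measure (PathPair k) → ℝ
  | 0, _ => 0
  | (k + 1), γ =>
      max (Cp p ((γ.map (peel k)).map Prod.fst))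
        (essSup (fun c => Fadapt p k (condK (γ.map (peel k)) c)) ((γ.map (peel k)).map Prod.fst))

/-- the adapted `(p,∞)`-Wasserstein distance `AW_p^∞`. -/
def AWinf (p : ℝ) {N : ℕ} (μ ν : Measure (Path N)) : ℝ :=
  sInf { r | ∃ γ : Measure (PathPair N), IsCoupling γ μ ν ∧ Bicausal γ ∧ r = Fadapt p N γ }

/-- `μ` is successively `W_p`-continuous: `x_{1:t} ↦ μ_{x_{1:t}}` is continuous w.r.t. `W_p`. -/
def SuccWpCont (p : ℝ) {N : ℕ} (μ : Measure (Path N)) : Prop :=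
  ∀ t < N, ∀ (xs : ℕ → Path N) (x : Path N),
    Tendsto (fun n => trunc N t (xs n)) atTop (𝓝 (trunc N t x)) →
    Tendsto (fun n => WpR p (stepK μ t (trunc N t (xs n))) (stepK μ t (trunc N t x)))
      atTop (𝓝 0)

/-- the one-step ambiguity set `Π_δ(m, ·)`. -/
def PiStep (p δ : ℝ) (m : Measure ℝ) : Set (Measure (ℝ × ℝ)) :=
  { π | IsProbabilityMeasure π ∧ π.map Prod.fst = m ∧ Cp p π < δ }

/-- the closed one-step ambiguity set `Π̄_δ(m, ·)`. -/
def PiStepCl (p δ : ℝ) (m : Measure ℝ) : Set (Measure (ℝ × ℝ)) :=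
  { π | IsProbabilityMeasure π ∧ π.map Prod.fst = m ∧ Cp p π ≤ δ }

/-- the Monge (transport-map) subset `Π^T_δ(m, ·)`. -/
def PiStepT (p δ : ℝ) (m : Measure ℝ) : Set (Measure (ℝ × ℝ)) :=
  { π | π ∈ PiStep p δ m ∧ ∃ (ν : Measure ℝ) (T : ℝ → ℝ), IsProbabilityMeasure ν ∧
      Integrable (fun y => |y| ^ p) ν ∧ Measurable T ∧ π = ν.map fun y => (T y, y) }

/-- the martingale one-step ambiguity set `Π^M_δ(m, ·)`. -/
def PiStepM (p δ : ℝ) (m : Measure ℝ) : Set (Measure (ℝ × ℝ)) :=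
  { π | IsProbabilityMeasure π ∧ π.map Prod.fst = m ∧ Cp p π < δ ∧
      ∫ z, (z.1 - z.2) ∂π = 0 }

/-- membership in the multistep ambiguity set `Π_δ(m, ·)` from time `t₀` on: `γ` is a
concatenation of one-step kernels lying in the one-step ambiguity sets, i.e. the conditional
law of `(X_{s+1}, Y_{s+1})` given `(X_{1:s}, Y_{1:s})` has first marginal `m_{x_{1:s}}` and
one-step cost `< δ`, almost surely, for every `s ≥ t₀`. -/
def MemPiDeltaFrom {N : ℕ} (p δ : ℝ) (m : Measure (Path N)) (t₀ : ℕ)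
    (γ : Measure (PathPair N)) : Prop :=
  IsProbabilityMeasure γ ∧ γ.map Prod.fst = m ∧
  ∀ s, t₀ ≤ s → s < N → ∀ᵐ ω ∂γ,
    (pairStepK γ s (trunc N s ω.1, trunc N s ω.2)).map Prod.fst = stepK m s (trunc N s ω.1) ∧
    Cp p (pairStepK γ s (trunc N s ω.1, trunc N s ω.2)) < δ

/-- membership in `Π_δ(m, ·)`. -/
def MemPiDelta {N : ℕ} (p δ : ℝ) (m : Measure (Path N)) (γ : Measure (PathPair N)) : Prop :=
  MemPiDeltaFrom p δ m 0 γ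

/-- membership in the martingale multistep ambiguity set `Π^M_δ(m, ·)`. -/
def MemPiDeltaM {N : ℕ} (p δ : ℝ) (m : Measure (Path N)) (γ : Measure (PathPair N)) : Prop :=
  IsProbabilityMeasure γ ∧ γ.map Prod.fst = m ∧
  ∀ s < N, ∀ᵐ ω ∂γ,
    (pairStepK γ s (trunc N s ω.1, trunc N s ω.2)).map Prod.fst = stepK m s (trunc N s ω.1) ∧
    Cp p (pairStepK γ s (trunc N s ω.1, trunc N s ω.2)) < δ ∧
    ∫ z, (z.1 - z.2) ∂(pairStepK γ s (trunc N s ω.1, trunc N s ω.2)) = 0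

/-- predictable controls with values in `K^N`: `α_t` depends only on `(x_{1:t-1}, y_{1:t-1})`. -/
def Predictable {N : ℕ} (K : Set ℝ) (α : PathPair N → Path N) : Prop :=
  Measurable α ∧ (∀ ω i, α ω i ∈ K) ∧
  ∀ (i : Fin N) (ω ω' : PathPair N),
    trunc N i ω.1 = trunc N i ω'.1 → trunc N i ω.2 = trunc N i ω'.2 → α ω i = α ω' i

/-- predictable controls of a single path with values in `K^N`. -/
def PredictableX {N : ℕ} (K : Set ℝ) (β : Path N → Path N) : Prop :=
  Measurable β ∧ (∀ x i, β x i ∈ K) ∧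
  ∀ (i : Fin N) (x x' : Path N), trunc N i x = trunc N i x' → β x i = β x' i

/-- uncontrolled backward value recursion (indexed by the number `k = N - t` of remaining
steps); `V^δ_t(x_{1:t}, y_{1:t}) = Vu p δ κ f (N - t) x y`. -/
def Vu {N : ℕ} (p δ : ℝ) (κ : ℕ → Path N → Measure ℝ) (f : Path N → ℝ) :
    ℕ → Path N → Path N → ℝ
  | 0, _, y => f y
  | (k + 1), x, y =>
      sSup { s | ∃ γ ∈ PiStep p δ (κ (N - (k + 1)) (trunc N (N - (k + 1)) x)),
        s = ∫ z, Vu p δ κ f k (updAt N (N - (k + 1)) x z.1)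
            (updAt N (N - (k + 1)) y z.2) ∂γ }

/-- controlled backward value recursion. -/
def Vc {N : ℕ} (p δ : ℝ) (κ : ℕ → Path N → Measure ℝ) (K : Set ℝ)
    (f : Path N → Path N → ℝ) : ℕ → Path N → Path N → Path N → ℝ
  | 0, _, y, a => f y a
  | (k + 1), x, y, a =>
      sInf { r | ∃ c ∈ K, r =
        sSup { s | ∃ γ ∈ PiStep p δ (κ (N - (k + 1)) (trunc N (N - (k + 1)) x)),
          s = ∫ z, Vc p δ κ K f k (updAt N (N - (k + 1)) x z.1)
              (updAt N (N - (k + 1)) y z.2) (updAt N (N - (k + 1)) a c) ∂γ } }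

/-- controlled backward value recursion with Monge one-step plans. -/
def VcT {N : ℕ} (p δ : ℝ) (κ : ℕ → Path N → Measure ℝ) (K : Set ℝ)
    (f : Path N → Path N → ℝ) : ℕ → Path N → Path N → Path N → ℝ
  | 0, _, y, a => f y a
  | (k + 1), x, y, a =>
      sInf { r | ∃ c ∈ K, r =
        sSup { s | ∃ γ ∈ PiStepT p δ (κ (N - (k + 1)) (trunc N (N - (k + 1)) x)),
          s = ∫ z, VcT p δ κ K f k (updAt N (N - (k + 1)) x z.1)
              (updAt N (N - (k + 1)) y z.2) (updAt N (N - (k + 1)) a c) ∂γ } }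

/-- controlled backward value recursion with the martingale constraint. -/
def VcM {N : ℕ} (p δ : ℝ) (κ : ℕ → Path N → Measure ℝ) (K : Set ℝ)
    (f : Path N → Path N → ℝ) : ℕ → Path N → Path N → Path N → ℝ
  | 0, _, y, a => f y a
  | (k + 1), x, y, a =>
      sInf { r | ∃ c ∈ K, r =
        sSup { s | ∃ γ ∈ PiStepM p δ (κ (N - (k + 1)) (trunc N (N - (k + 1)) x)),
          s = ∫ z, VcM p δ κ K f k (updAt N (N - (k + 1)) x z.1)
              (updAt N (N - (k + 1)) y z.2) (updAt N (N - (k + 1)) a c) ∂γ } }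

/-- the distributionally robust control problem `V(δ)`. -/
def Vdro {N : ℕ} (p δ : ℝ) (μ : Measure (Path N)) (K : Set ℝ)
    (f : Path N → Path N → ℝ) : ℝ :=
  sInf { r | ∃ α : PathPair N → Path N, Predictable K α ∧
    r = sSup { s | ∃ γ : Measure (PathPair N), MemPiDelta p δ μ γ ∧ Bicausal γ ∧
        s = ∫ ω, f ω.2 (α ω) ∂γ } }

/-- the martingale-constrained distributionally robust control problem `V^M(δ)`. -/
def VdroM {N : ℕ} (p δ : ℝ) (μ : Measure (Path N)) (K : Set ℝ)
    (f : Path N → Path N → ℝ) : ℝ :=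
  sInf { r | ∃ α : PathPair N → Path N, Predictable K α ∧
    r = sSup { s | ∃ γ : Measure (PathPair N), MemPiDeltaM p δ μ γ ∧ Bicausal γ ∧
        s = ∫ ω, f ω.2 (α ω) ∂γ } }

/-- the non-robust value `V(0)`. -/
def V0 {N : ℕ} (μ : Measure (Path N)) (K : Set ℝ) (f : Path N → Path N → ℝ) : ℝ :=
  sInf { r | ∃ β : Path N → Path N, PredictableX K β ∧ r = ∫ x, f x (β x) ∂μ }

/-- the partial derivative `∂_s f(x, a)` in the `s`-th state coordinate (`0`-based). -/
def Dstate {N : ℕ} (f : Path N → Path N → ℝ) (s : ℕ) (x a : Path N) : ℝ :=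
  if h : s < N then fderiv ℝ (fun z => f z a) x (Pi.single (⟨s, h⟩ : Fin N) 1) else 0

/-- `x_{1:s+1} ↦ ∫ ∂_{s+1} f(z, β(z)) μ̄_{x_{1:s+1}}(dz)` (`1`-based index `t = s + 1`). -/
def Gfun {N : ℕ} (μ : Measure (Path N)) (f : Path N → Path N → ℝ)
    (β : Path N → Path N) (s : ℕ) (x : Path N) : ℝ :=
  ∫ z, Dstate f s z (β z) ∂(condPath μ (s + 1) (trunc N (s + 1) x))

/-- Proposition 6.6: the open-cost-constraint set `Π_δ(η, ·)` is dense in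
the closed-cost-constraint set `Π̄_δ(η, ·)` with respect to the Wasserstein distance `W_p`. -/
theorem statement16 (p : ℝ) (hp : 1 ≤ p) (δ : ℝ) (hδ : 0 < δ)
    (η : Measure ℝ) (hη : IsProbabilityMeasure η)
    (hηm : Integrable (fun x => |x| ^ p) η) :
    ∀ π ∈ PiStepCl p δ η, ∀ ε > 0, ∃ π' ∈ PiStep p δ η, Wp2 p π' π < ε := by
  rintro π ⟨hπprob, hπfst, hπcost⟩ ε hε
  have hp0 : (0:ℝ) < p := lt_of_lt_of_le one_pos hp
  have hpne : p ≠ 0 := hp0.ne'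
  set c : ℝ := min 1 (ε / (2 * δ)) with hc
  have hc0 : 0 < c := lt_min one_pos (div_pos hε (by linarith))
  have hc1 : c ≤ 1 := min_le_left _ _
  have h1c : (0:ℝ) ≤ 1 - c := by linarith
  have hcδ : c * δ < ε := by
    have h1 : c ≤ ε / (2*δ) := min_le_right _ _
    have h2 : c * δ ≤ (ε/(2*δ)) * δ := by nlinarith
    have h3 : (ε/(2*δ)) * δ = ε/2 := by field_simp
    linarith
  set G : ℝ × ℝ → ℝ × ℝ := fun w => (w.1, (1-c)*w.2 + c*w.1) with hG
  have hGmeas : Measurable G := by fun_prop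
  set π' := π.map G with hπ'
  set I : ℝ := ∫ z : ℝ × ℝ, |z.1 - z.2| ^ p ∂π with hIdef
  have hI0 : 0 ≤ I := integral_nonneg fun z => by positivity
  have hIp : I ^ (1/p) ≤ δ := hπcost
  -- measurability of integrand
  have hintm : AEStronglyMeasurable (fun z : ℝ × ℝ => |z.1 - z.2| ^ p) π' := by
    apply Measurable.aestronglyMeasurable; fun_prop
  -- cost of π'
  have hA : (∫ z : ℝ × ℝ, |z.1 - z.2| ^ p ∂π') = (1-c)^p * I := by
    rw [hπ', integral_map hGmeas.aemeasurable hintm]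
    have : ∀ w : ℝ × ℝ, |(G w).1 - (G w).2| ^ p = (1-c)^p * |w.1 - w.2| ^ p := by
      intro w
      have h1 : (G w).1 - (G w).2 = (1-c) * (w.1 - w.2) := by simp [hG]; ring
      rw [h1, abs_mul, abs_of_nonneg h1c, Real.mul_rpow h1c (abs_nonneg _)]
    simp_rw [this]
    exact integral_const_mul _ _
  have hCp' : Cp p π' = (1-c) * I ^ (1/p) := by
    rw [Cp, hA, Real.mul_rpow (by positivity) hI0, ← Real.rpow_mul h1c,
      mul_one_div_cancel hpne, Real.rpow_one]
  have hπ'mem : π' ∈ PiStep p δ η := by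
    refine ⟨Measure.isProbabilityMeasure_map hGmeas.aemeasurable, ?_, ?_⟩
    · rw [hπ', Measure.map_map measurable_fst hGmeas]
      have : (Prod.fst ∘ G) = Prod.fst := by funext w; simp [hG]
      rw [this, hπfst]
    · rw [hCp']
      have : (1-c) * I ^ (1/p) ≤ (1-c) * δ := mul_le_mul_of_nonneg_left hIp h1c
      nlinarith
  refine ⟨π', hπ'mem, ?_⟩
  -- the coupling
  set F : ℝ × ℝ → (ℝ × ℝ) × (ℝ × ℝ) := fun w => (G w, w) with hF
  have hFmeas : Measurable F := by fun_prop
  set Γ := π.map F with hΓ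
  have hcoup : IsCoupling Γ π' π := by
    constructor
    · rw [hΓ, Measure.map_map measurable_fst hFmeas]
      rfl
    · rw [hΓ, Measure.map_map measurable_snd hFmeas]
      have : (Prod.snd ∘ F) = id := by funext w; simp [hF]
      rw [this, Measure.map_id]
  have hcostΓ : (∫ w, (|w.1.1 - w.2.1| ^ p + |w.1.2 - w.2.2| ^ p) ∂Γ) = c^p * I := by
    rw [hΓ, integral_map hFmeas.aemeasurable (by apply Measurable.aestronglyMeasurable; fun_prop)]
    have : ∀ w : ℝ × ℝ, |(F w).1.1 - (F w).2.1| ^ p + |(F w).1.2 - (F w).2.2| ^ p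
        = c^p * |w.1 - w.2| ^ p := by
      intro w
      have h1 : (F w).1.1 - (F w).2.1 = 0 := by simp [hF, hG]
      have h2 : (F w).1.2 - (F w).2.2 = c * (w.1 - w.2) := by simp [hF, hG]; ring
      rw [h1, h2, abs_zero, Real.zero_rpow hpne, zero_add, abs_mul,
        abs_of_nonneg hc0.le, Real.mul_rpow hc0.le (abs_nonneg _)]
    simp_rw [this]
    exact integral_const_mul _ _
  have hr : (∫ w, (|w.1.1 - w.2.1| ^ p + |w.1.2 - w.2.2| ^ p) ∂Γ) ^ (1/p)
      = c * I ^ (1/p) := by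
    rw [hcostΓ, Real.mul_rpow (by positivity) hI0, ← Real.rpow_mul hc0.le,
      mul_one_div_cancel hpne, Real.rpow_one]
  have hbdd : BddBelow { r | ∃ Γ : Measure ((ℝ × ℝ) × (ℝ × ℝ)), IsCoupling Γ π' π ∧
      r = (∫ w, (|w.1.1 - w.2.1| ^ p + |w.1.2 - w.2.2| ^ p) ∂Γ) ^ (1 / p) } := by
    refine ⟨0, ?_⟩
    rintro r ⟨Γ', -, rfl⟩
    exact Real.rpow_nonneg (integral_nonneg fun w => by positivity) _
  have hle : Wp2 p π' π ≤ c * I ^ (1/p) := by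
    rw [← hr]
    exact csInf_le hbdd ⟨Γ, hcoup, rfl⟩
  have : c * I ^ (1/p) ≤ c * δ := mul_le_mul_of_nonneg_left hIp hc0.le
  linarith
end Paper
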